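/- Let c ∈ ℝ with c + 1 > 0 and fix r₀, R₀ > 0. Then there exist C₁, C₂ > 0 such that for all r ∈ [0, r₀] and all y ∈ [0, R₀], C₂ r^{N+1+c⁺} ≤ V((x,y), r) ≤ C₁ r^{N+1−c⁻}, where c⁺ = max(c,0) and c⁻ = max(−c, 0). -/

import Mathlib

open MeasureTheory Set

/-- `V ((x,y), r) = ω_N r^N ∫_{max(y-r,0)}^{y+r} s^c ds`, the μ-measure
(`dμ = y^c dx dy`) of the cylindrical ball `B(x,r) × (max(y-r,0), y+r)`. -/
noncomputable def V (N : ℕ) (c y₀ r : ℝ) : ℝ :=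
  (volume (Metric.ball (0 : EuclideanSpace ℝ (Fin N)) 1)).toReal * r ^ N *
    ∫ s in Ioo (max (y₀ - r) 0) (y₀ + r), s ^ c

/-!
The window `(a, b) = (max (y - r) 0, y + r)` has length between `r` and `2r` and lies in
`[0, R₀ + r₀]`. On it `s ^ c` is bounded on one side by `(R₀ + r₀) ^ c`, which gives a bound
linear in the length. On the other side, because `s ↦ s ^ c` is monotone, the integral is
compared with the one over `(0, b - a)`, i.e. `(b - a) ^ (c + 1) / (c + 1)`; this is the
(super/sub)additivity of `t ↦ t ^ (c + 1)`.
-/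

section IntegralRpow

variable {a b c K : ℝ}

theorem integral_rpow_le_mul_sub (hc : 0 ≤ c) (ha : 0 ≤ a) (hab : a ≤ b) (hbK : b ≤ K) :
    ∫ s in a..b, s ^ c ≤ K ^ c * (b - a) := by
  calc ∫ s in a..b, s ^ c ≤ ∫ _ in a..b, K ^ c :=
        intervalIntegral.integral_mono_on_of_le_Ioo hab
          (intervalIntegral.intervalIntegrable_rpow' (by linarith)) intervalIntegrable_const
          fun s hs => Real.rpow_le_rpow (ha.trans hs.1.le) (hs.2.le.trans hbK) hc
    _ = K ^ c * (b - a) := by rw [intervalIntegral.integral_const, smul_eq_mul, mul_comm]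

theorem mul_sub_le_integral_rpow (hc₁ : -1 < c) (hc : c ≤ 0) (ha : 0 ≤ a) (hab : a ≤ b)
    (hbK : b ≤ K) :
    K ^ c * (b - a) ≤ ∫ s in a..b, s ^ c := by
  calc K ^ c * (b - a) = ∫ _ in a..b, K ^ c := by
        rw [intervalIntegral.integral_const, smul_eq_mul, mul_comm]
    _ ≤ ∫ s in a..b, s ^ c :=
        intervalIntegral.integral_mono_on_of_le_Ioo hab intervalIntegrable_const
          (intervalIntegral.intervalIntegrable_rpow' hc₁)
          fun s hs => Real.rpow_le_rpow_of_nonpos (ha.trans_lt hs.1) (hs.2.le.trans hbK) hc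

theorem sub_rpow_div_le_integral_rpow (hc : 0 ≤ c) (ha : 0 ≤ a) (hab : a ≤ b) :
    (b - a) ^ (c + 1) / (c + 1) ≤ ∫ s in a..b, s ^ c := by
  rw [integral_rpow (Or.inl (by linarith))]
  have := Real.add_rpow_le_rpow_add ha (sub_nonneg.2 hab) (by linarith : 1 ≤ c + 1)
  rw [add_sub_cancel] at this
  gcongr
  linarith

theorem integral_rpow_le_sub_rpow_div (hc₁ : -1 < c) (hc : c ≤ 0) (ha : 0 ≤ a) (hab : a ≤ b) :
    ∫ s in a..b, s ^ c ≤ (b - a) ^ (c + 1) / (c + 1) := by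
  rw [integral_rpow (Or.inl hc₁)]
  have := Real.rpow_add_le_add_rpow ha (sub_nonneg.2 hab) (by linarith) (by linarith : c + 1 ≤ 1)
  rw [add_sub_cancel] at this
  have : 0 < c + 1 := by linarith
  gcongr
  linarith

end IntegralRpow

theorem Real.rpow_natCast_add {r p : ℝ} (N : ℕ) (hr : 0 ≤ r) (hp : 0 < p) :
    r ^ ((N : ℝ) + p) = r ^ N * r ^ p := by
  rw [Real.rpow_add' hr (by positivity), Real.rpow_natCast]

noncomputable def unitBallVolume (N : ℕ) : ℝ :=
  (volume (Metric.ball (0 : EuclideanSpace ℝ (Fin N)) 1)).toReal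

theorem unitBallVolume_pos (N : ℕ) : 0 < unitBallVolume N :=
  ENNReal.toReal_pos (Metric.measure_ball_pos _ _ one_pos).ne' measure_ball_lt_top.ne

section V

variable {N : ℕ} {c y r K : ℝ}

theorem window_bounds (hr : 0 ≤ r) (hy : 0 ≤ y) :
    0 ≤ max (y - r) 0 ∧ max (y - r) 0 ≤ y + r ∧
      r ≤ y + r - max (y - r) 0 ∧ y + r - max (y - r) 0 ≤ 2 * r := by
  refine ⟨le_max_right _ _, max_le (by linarith) (by linarith), ?_, ?_⟩
  · linarith [max_le (by linarith : y - r ≤ y) hy]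
  · linarith [le_max_left (y - r) 0]

theorem V_eq_intervalIntegral (hr : 0 ≤ r) (hy : 0 ≤ y) :
    V N c y r = unitBallVolume N * r ^ N * ∫ s in max (y - r) 0..y + r, s ^ c := by
  rw [intervalIntegral.integral_of_le (window_bounds hr hy).2.1, integral_Ioc_eq_integral_Ioo]
  rfl

theorem V_bounds_of_nonneg (hc : 0 ≤ c) (hr : 0 ≤ r) (hy : 0 ≤ y) (hK : y + r ≤ K) :
    unitBallVolume N / (c + 1) * r ^ ((N : ℝ) + 1 + c) ≤ V N c y r ∧
      V N c y r ≤ unitBallVolume N * (2 * K ^ c) * r ^ ((N : ℝ) + 1) := by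
  obtain ⟨ha, hab, hlen, hlen'⟩ := window_bounds hr hy
  have hK₀ : 0 ≤ K := by linarith
  have hω := (unitBallVolume_pos N).le
  rw [V_eq_intervalIntegral hr hy, show (N : ℝ) + 1 + c = N + (c + 1) by ring, Real.rpow_natCast_add N hr (by linarith),
    Real.rpow_natCast_add N hr one_pos, Real.rpow_one]
  constructor
  · calc unitBallVolume N / (c + 1) * (r ^ N * r ^ (c + 1))
          = unitBallVolume N * r ^ N * (r ^ (c + 1) / (c + 1)) := by ring
      _ ≤ unitBallVolume N * r ^ N * ((y + r - max (y - r) 0) ^ (c + 1) / (c + 1)) := by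
          gcongr
      _ ≤ _ := by gcongr; exact sub_rpow_div_le_integral_rpow hc ha hab
  · calc unitBallVolume N * r ^ N * ∫ s in max (y - r) 0..y + r, s ^ c
          ≤ unitBallVolume N * r ^ N * (K ^ c * (y + r - max (y - r) 0)) := by
          gcongr; exact integral_rpow_le_mul_sub hc ha hab hK
      _ ≤ unitBallVolume N * r ^ N * (K ^ c * (2 * r)) := by gcongr
      _ = _ := by ring

theorem V_bounds_of_nonpos (hc₁ : -1 < c) (hc : c ≤ 0) (hr : 0 ≤ r) (hy : 0 ≤ y)
    (hK : y + r ≤ K) :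
    unitBallVolume N * K ^ c * r ^ ((N : ℝ) + 1) ≤ V N c y r ∧
      V N c y r ≤ unitBallVolume N * (2 ^ (c + 1) / (c + 1)) * r ^ ((N : ℝ) + 1 + c) := by
  obtain ⟨ha, hab, hlen, hlen'⟩ := window_bounds hr hy
  have hc₁' : 0 < c + 1 := by linarith
  have hK₀ : 0 ≤ K := by linarith
  have hω := (unitBallVolume_pos N).le
  rw [V_eq_intervalIntegral hr hy, show (N : ℝ) + 1 + c = N + (c + 1) by ring, Real.rpow_natCast_add N hr hc₁',
    Real.rpow_natCast_add N hr one_pos, Real.rpow_one]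
  constructor
  · calc unitBallVolume N * K ^ c * (r ^ N * r)
          = unitBallVolume N * r ^ N * (K ^ c * r) := by ring
      _ ≤ unitBallVolume N * r ^ N * (K ^ c * (y + r - max (y - r) 0)) := by gcongr
      _ ≤ _ := by gcongr; exact mul_sub_le_integral_rpow hc₁ hc ha hab hK
  · calc unitBallVolume N * r ^ N * ∫ s in max (y - r) 0..y + r, s ^ c
          ≤ unitBallVolume N * r ^ N * ((y + r - max (y - r) 0) ^ (c + 1) / (c + 1)) := by
          gcongr; exact integral_rpow_le_sub_rpow_div hc₁ hc ha hab
      _ ≤ unitBallVolume N * r ^ N * ((2 * r) ^ (c + 1) / (c + 1)) := by gcongr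
      _ = _ := by rw [Real.mul_rpow zero_le_two hr]; ring

end V

/-- Lemma 2.7 (local estimate for `V`): for fixed `r₀, R₀ > 0` there are
`C₁, C₂ > 0` with `C₂ r^{N+1+c⁺} ≤ V((x,y),r) ≤ C₁ r^{N+1-c⁻}` for
`r ∈ [0,r₀]`, `y ∈ [0,R₀]`. -/
theorem stmt_4 (N : ℕ) (c : ℝ) (hc : c + 1 > 0) (r₀ R₀ : ℝ) (hr₀ : 0 < r₀) (hR₀ : 0 < R₀) :
    ∃ C₁ > (0:ℝ), ∃ C₂ > (0:ℝ), ∀ r y : ℝ, r ∈ Icc 0 r₀ → y ∈ Icc 0 R₀ →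
      C₂ * r ^ ((N : ℝ) + 1 + max c 0) ≤ V N c y r ∧
      V N c y r ≤ C₁ * r ^ ((N : ℝ) + 1 - max (-c) 0) := by
  have hω := unitBallVolume_pos N
  have hK : 0 < R₀ + r₀ := by positivity
  rcases le_total 0 c with hc₀ | hc₀
  · refine ⟨unitBallVolume N * (2 * (R₀ + r₀) ^ c), by positivity,
      unitBallVolume N / (c + 1), by positivity, ?_⟩
    rintro r y ⟨hr, hrr₀⟩ ⟨hy, hyR₀⟩
    rw [max_eq_left hc₀, max_eq_right (neg_nonpos.2 hc₀), sub_zero]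
    exact V_bounds_of_nonneg hc₀ hr hy (by linarith)
  · refine ⟨unitBallVolume N * (2 ^ (c + 1) / (c + 1)), by positivity,
      unitBallVolume N * (R₀ + r₀) ^ c, by positivity, ?_⟩
    rintro r y ⟨hr, hrr₀⟩ ⟨hy, hyR₀⟩
    rw [max_eq_right hc₀, max_eq_left (neg_nonneg.2 hc₀), add_zero, sub_neg_eq_add]
    exact V_bounds_of_nonpos (by linarith) hc₀ hr hy (by linarith)
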